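/- Let μ be any probability distribution on the 16 Boolean rules and set w = μ({φ0, φ15}), where φ0 is the constant-0 rule and φ15 is the constant-1 rule. If w > 0, then for the random Boolean cellular automaton with rule distribution μ one has σ_* ≥ w, and |σ_N − σ_*| ≤ 4·(1−w)^{N/2} for every N ≥ 3; in particular σ_N → σ_* as N → ∞ and σ_* > 0. -/

import Mathlib

open MeasureTheory ProbabilityTheory Filter

/-- A Boolean rule: a function `{0,1} × {0,1} → {0,1}`. -/
abbrev Rule : Type := Bool → Bool → Bool

/-- The constant-0 rule. -/
def phi0 : Rule := fun _ _ => false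
/-- The constant-1 rule. -/
def phi15 : Rule := fun _ _ => true

/-- The Bernoulli(1/2) distribution on `Bool`. -/
noncomputable def berHalf : Measure Bool :=
  (2 : ENNReal)⁻¹ • (Measure.dirac true + Measure.dirac false)

/-- Evolution of an inhomogeneous cellular automaton on ℤ:
`x_i(t+1) = φ_i(x_{i-1}(t), x_{i+1}(t))`. -/
def evolveZ (φ : ℤ → Rule) (x0 : ℤ → Bool) : ℕ → ℤ → Bool
  | 0 => x0
  | t+1 => fun i => φ i (evolveZ φ x0 t (i-1)) (evolveZ φ x0 t (i+1))

/-- Evolution of an inhomogeneous cellular automaton on the circle ℤ/Nℤ. -/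
def evolveC (N : ℕ) (φ : ZMod N → Rule) (x0 : ZMod N → Bool) : ℕ → ZMod N → Bool
  | 0 => x0
  | t+1 => fun i => φ i (evolveC N φ x0 t (i-1)) (evolveC N φ x0 t (i+1))

/-- A trajectory `t ↦ x(t)` stabilizes if it is eventually constant. -/
def Stabilizes (x : ℕ → Bool) : Prop := ∃ T, ∀ t, T ≤ t → x t = x T

/-- Trajectory of cell `i` in the infinite RBCA realization where cell `j` has rule
`(W j ω).1` and initial value `(W j ω).2`. -/
def traj (W : ℤ → Ω → Rule × Bool) (ω : Ω) (i : ℤ) : ℕ → Bool :=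
  fun t => evolveZ (fun j => (W j ω).1) (fun j => (W j ω).2) t i

/-- Trajectory of cell `i` in the size-`N` RBCA realization where cell `j` has rule
`(W j ω).1` and initial value `(W j ω).2`. -/
def trajC (N : ℕ) (W : ZMod N → Ω → Rule × Bool) (ω : Ω) (i : ZMod N) : ℕ → Bool :=
  fun t => evolveC N (fun j => (W j ω).1) (fun j => (W j ω).2) t i

/-- `IsConstRule φ` iff φ ignores its arguments. -/
def IsConstRule (φ : Rule) : Prop := ∀ a b a' b', φ a b = φ a' b'

lemma isConstRule_of_mem {φ : Rule} (h : φ ∈ ({phi0, phi15} : Set Rule)) : IsConstRule φ := by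
  rcases h with h | h <;> subst h <;> intro a b a' b' <;> rfl

lemma evolveZ_congr (φ φ' : ℤ → Rule) (x x' : ℤ → Bool) (lo hi : ℤ)
    (hφ : ∀ j, lo ≤ j → j ≤ hi → φ j = φ' j)
    (hx : ∀ j, lo ≤ j → j ≤ hi → x j = x' j)
    (hclo : IsConstRule (φ lo)) (hchi : IsConstRule (φ hi)) :
    ∀ t i, lo ≤ i → i ≤ hi → evolveZ φ x t i = evolveZ φ' x' t i := by
  intro t
  induction t with
  | zero => exact fun i h1 h2 => hx i h1 h2
  | succ t ih =>
    intro i h1 h2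
    show φ i _ _ = φ' i _ _
    rw [← hφ i h1 h2]
    rcases eq_or_lt_of_le h1 with rfl | h1'
    · exact hclo _ _ _ _
    rcases eq_or_lt_of_le h2 with rfl | h2'
    · exact hchi _ _ _ _
    rw [ih (i-1) (by omega) (by omega), ih (i+1) (by omega) (by omega)]

lemma evolveC_eq_evolveZ (N : ℕ) (φ : ℤ → Rule) (ψ : ZMod N → Rule)
    (x : ℤ → Bool) (y : ZMod N → Bool) (lo hi : ℤ)
    (hφ : ∀ j, lo ≤ j → j ≤ hi → ψ ((j : ℤ) : ZMod N) = φ j)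
    (hx : ∀ j, lo ≤ j → j ≤ hi → y ((j : ℤ) : ZMod N) = x j)
    (hclo : IsConstRule (φ lo)) (hchi : IsConstRule (φ hi)) :
    ∀ t i, lo ≤ i → i ≤ hi → evolveC N ψ y t ((i : ℤ) : ZMod N) = evolveZ φ x t i := by
  intro t
  induction t with
  | zero => exact fun i h1 h2 => hx i h1 h2
  | succ t ih =>
    intro i h1 h2
    show ψ _ _ _ = φ i _ _
    rw [hφ i h1 h2]
    rcases eq_or_lt_of_le h1 with rfl | h1'
    · exact hclo _ _ _ _
    rcases eq_or_lt_of_le h2 with rfl | h2'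
    · exact hchi _ _ _ _
    have e1 : ((i : ZMod N) - 1) = (((i - 1 : ℤ) : ZMod N)) := by push_cast; ring
    have e2 : ((i : ZMod N) + 1) = (((i + 1 : ℤ) : ZMod N)) := by push_cast; ring
    rw [e1, e2, ih (i-1) (by omega) (by omega), ih (i+1) (by omega) (by omega)]

lemma stabilizes_of_constZ (φ : ℤ → Rule) (x : ℤ → Bool) (h : IsConstRule (φ 0)) :
    Stabilizes (fun t => evolveZ φ x t 0) := by
  refine ⟨1, fun t ht => ?_⟩
  cases t with
  | zero => omega
  | succ s => exact h _ _ _ _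

lemma stabilizes_of_constC (N : ℕ) (φ : ZMod N → Rule) (x : ZMod N → Bool) (h : IsConstRule (φ 0)) :
    Stabilizes (fun t => evolveC N φ x t 0) := by
  refine ⟨1, fun t ht => ?_⟩
  cases t with
  | zero => omega
  | succ s => exact h _ _ _ _
lemma map_window {Ω' : Type*} [MeasurableSpace Ω'] {ι : Type*}
    (P : Measure Ω') [IsProbabilityMeasure P]
    (W : ι → Ω' → Rule × Bool) (hmeas : ∀ i, Measurable (W i))
    (hindep : iIndepFun W P)
    (ν : Measure (Rule × Bool)) [IsProbabilityMeasure ν]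
    (hlaw : ∀ i, Measure.map (W i) P = ν)
    (n : ℕ) (c : Fin n → ι) (hc : Function.Injective c) :
    Measure.map (fun ω k => W (c k) ω) P = Measure.pi (fun _ => ν) := by
  have hwm : Measurable (fun ω (k : Fin n) => W (c k) ω) :=
    measurable_pi_lambda _ (fun k => hmeas _)
  refine Measure.ext_of_singleton (fun v => ?_)
  rw [Measure.map_apply hwm MeasurableSet.of_discrete]
  classical
  set sets : ι → Set (Rule × Bool) := fun i => {p | ∀ k, c k = i → p = v k} with hsets
  have hsetsc : ∀ k, sets (c k) = {v k} := by
    intro k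
    ext p
    simp only [hsets, Set.mem_setOf_eq, Set.mem_singleton_iff]
    exact ⟨fun h => h k rfl, fun h k' hk' => by rw [hc hk']; exact h⟩
  have hpre : (fun ω (k : Fin n) => W (c k) ω) ⁻¹' {v}
      = ⋂ i ∈ Finset.image c Finset.univ, W i ⁻¹' (sets i) := by
    ext ω
    simp only [Set.mem_preimage, Set.mem_singleton_iff, funext_iff, Set.mem_iInter,
      Finset.mem_image, Finset.mem_univ, true_and]
    constructor
    · rintro h i ⟨k, rfl⟩
      rw [hsetsc k]
      exact h k
    · intro h k
      have := h (c k) ⟨k, rfl⟩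
      rw [hsetsc k] at this
      exact this
  rw [hpre, hindep.measure_inter_preimage_eq_mul _ (fun i _ => MeasurableSet.of_discrete),
    Finset.prod_image (fun k _ k' _ h => hc h)]
  rw [← Set.univ_pi_singleton v, Measure.pi_pi]
  refine Finset.prod_congr rfl (fun k _ => ?_)
  rw [hsetsc k, ← hlaw (c k), Measure.map_apply (hmeas _) MeasurableSet.of_discrete]

def extRP (l r : ℕ) (v : Fin (l + r + 1) → Rule × Bool) : ℤ → Rule × Bool :=
  fun j => if h : 0 ≤ j + l ∧ j ≤ r then v ⟨(j + l).toNat, by omega⟩ else (phi0, false)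

def winset (l r : ℕ) : Set (Fin (l + r + 1) → Rule × Bool) :=
  {v | (∀ k : Fin (l + r + 1),
      ((v k).1 ∈ ({phi0, phi15} : Set Rule) ↔ ((k : ℕ) = 0 ∨ (k : ℕ) = l + r))) ∧
    Stabilizes (fun t => evolveZ (fun j => (extRP l r v j).1) (fun j => (extRP l r v j).2) t 0)}

lemma extRP_eq (l r : ℕ) (v : Fin (l + r + 1) → Rule × Bool) (j : ℤ)
    (h1 : -(l:ℤ) ≤ j) (h2 : j ≤ r) :
    extRP l r v j = v ⟨(j + l).toNat, by omega⟩ := dif_pos ⟨by omega, h2⟩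

lemma eventZ_eq {Ω' : Type*} (W : ℤ → Ω' → Rule × Bool) (l r : ℕ) (hl : 1 ≤ l) (hr : 1 ≤ r) :
    {ω | (∀ j : ℤ, -(l:ℤ) ≤ j → j ≤ r →
          ((W j ω).1 ∈ ({phi0, phi15} : Set Rule) ↔ (j = -(l:ℤ) ∨ j = (r:ℤ))))
        ∧ Stabilizes (traj W ω 0)}
      = (fun ω (k : Fin (l + r + 1)) => W ((k : ℤ) - l) ω) ⁻¹' winset l r := by
  ext ω
  have hext : ∀ j : ℤ, -(l:ℤ) ≤ j → j ≤ r →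
      extRP l r (fun k => W ((k : ℤ) - l) ω) j = W j ω := by
    intro j h1 h2
    rw [extRP_eq l r _ j h1 h2]
    show W (((j + l).toNat : ℤ) - l) ω = W j ω
    congr 1
    omega
  have key : (∀ j : ℤ, -(l:ℤ) ≤ j → j ≤ r →
        ((W j ω).1 ∈ ({phi0, phi15} : Set Rule) ↔ (j = -(l:ℤ) ∨ j = (r:ℤ)))) →
      ∀ t, evolveZ (fun j => (W j ω).1) (fun j => (W j ω).2) t 0
        = evolveZ (fun j => (extRP l r (fun k => W ((k : ℤ) - l) ω) j).1)
            (fun j => (extRP l r (fun k => W ((k : ℤ) - l) ω) j).2) t 0 := by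
    intro hc t
    refine evolveZ_congr _ _ _ _ (-(l:ℤ)) (r:ℤ)
      (fun j h1 h2 => by rw [hext j h1 h2]) (fun j h1 h2 => by rw [hext j h1 h2])
      ?_ ?_ t 0 (by omega) (by omega)
    · exact isConstRule_of_mem ((hc (-(l:ℤ)) le_rfl (by omega)).mpr (Or.inl rfl))
    · exact isConstRule_of_mem ((hc (r:ℤ) (by omega) le_rfl).mpr (Or.inr rfl))
  constructor
  · rintro ⟨hc, hs⟩
    refine ⟨fun k => ?_, ?_⟩
    · have hk := k.isLt
      exact (hc ((k:ℤ) - l) (by omega) (by omega)).trans (by omega)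
    · show Stabilizes _
      rw [show (fun t => evolveZ (fun j => (extRP l r (fun k => W ((k : ℤ) - l) ω) j).1)
          (fun j => (extRP l r (fun k => W ((k : ℤ) - l) ω) j).2) t 0) = traj W ω 0
        from funext fun t => (key hc t).symm]
      exact hs
  · rintro ⟨hc, hs⟩
    have hcj : ∀ j : ℤ, -(l:ℤ) ≤ j → j ≤ r →
        ((W j ω).1 ∈ ({phi0, phi15} : Set Rule) ↔ (j = -(l:ℤ) ∨ j = (r:ℤ))) := by
      intro j h1 h2
      have hk := hc ⟨(j + l).toNat, by omega⟩
      simp only at hk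
      have hj : (((j + l).toNat : ℤ) - l) = j := by omega
      rw [hj] at hk
      exact hk.trans (by omega)
    refine ⟨hcj, ?_⟩
    show Stabilizes (traj W ω 0)
    rw [show traj W ω 0 = (fun t => evolveZ (fun j => (extRP l r (fun k => W ((k : ℤ) - l) ω) j).1)
        (fun j => (extRP l r (fun k => W ((k : ℤ) - l) ω) j).2) t 0)
      from funext fun t => key hcj t]
    exact hs

lemma eventC_eq {Ω' : Type*} (N : ℕ) (W : ZMod N → Ω' → Rule × Bool) (l r : ℕ)
    (hl : 1 ≤ l) (hr : 1 ≤ r) :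
    {ω | (∀ j : ℤ, -(l:ℤ) ≤ j → j ≤ r →
          ((W ((j : ℤ) : ZMod N) ω).1 ∈ ({phi0, phi15} : Set Rule) ↔ (j = -(l:ℤ) ∨ j = (r:ℤ))))
        ∧ Stabilizes (trajC N W ω 0)}
      = (fun ω (k : Fin (l + r + 1)) => W ((((k : ℤ) - l : ℤ)) : ZMod N) ω) ⁻¹' winset l r := by
  ext ω
  have hext : ∀ j : ℤ, -(l:ℤ) ≤ j → j ≤ r →
      extRP l r (fun k => W ((((k : ℤ) - l : ℤ)) : ZMod N) ω) j = W ((j : ℤ) : ZMod N) ω := by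
    intro j h1 h2
    rw [extRP_eq l r _ j h1 h2]
    show W (((((j + l).toNat : ℤ) - l : ℤ)) : ZMod N) ω = W ((j : ℤ) : ZMod N) ω
    congr 2
    omega
  have key : (∀ j : ℤ, -(l:ℤ) ≤ j → j ≤ r →
        ((W ((j : ℤ) : ZMod N) ω).1 ∈ ({phi0, phi15} : Set Rule) ↔ (j = -(l:ℤ) ∨ j = (r:ℤ)))) →
      ∀ t, evolveC N (fun i => (W i ω).1) (fun i => (W i ω).2) t (((0:ℤ) : ZMod N))
        = evolveZ (fun j => (extRP l r (fun k => W ((((k : ℤ) - l : ℤ)) : ZMod N) ω) j).1)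
            (fun j => (extRP l r (fun k => W ((((k : ℤ) - l : ℤ)) : ZMod N) ω) j).2) t 0 := by
    intro hc t
    refine evolveC_eq_evolveZ N _ _ _ _ (-(l:ℤ)) (r:ℤ)
      (fun j h1 h2 => by rw [← hext j h1 h2]) (fun j h1 h2 => by rw [← hext j h1 h2])
      ?_ ?_ t 0 (by omega) (by omega)
    · have := (hc (-(l:ℤ)) le_rfl (by omega)).mpr (Or.inl rfl)
      rw [← hext (-(l:ℤ)) le_rfl (by omega)] at this
      exact isConstRule_of_mem this
    · have := (hc (r:ℤ) (by omega) le_rfl).mpr (Or.inr rfl)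
      rw [← hext (r:ℤ) (by omega) le_rfl] at this
      exact isConstRule_of_mem this
  have hzero : (((0:ℤ) : ZMod N)) = (0 : ZMod N) := by exact_mod_cast rfl
  have htraj : trajC N W ω 0
      = fun t => evolveC N (fun i => (W i ω).1) (fun i => (W i ω).2) t (((0:ℤ) : ZMod N)) := by
    rw [hzero]; rfl
  constructor
  · rintro ⟨hc, hs⟩
    refine ⟨fun k => ?_, ?_⟩
    · have hk := k.isLt
      exact (hc ((k:ℤ) - l) (by omega) (by omega)).trans (by omega)
    · show Stabilizes _
      rw [show (fun t => evolveZ (fun j => (extRP l r (fun k => W ((((k : ℤ) - l : ℤ)) : ZMod N) ω) j).1)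
          (fun j => (extRP l r (fun k => W ((((k : ℤ) - l : ℤ)) : ZMod N) ω) j).2) t 0)
          = trajC N W ω 0
        from htraj ▸ funext fun t => (key hc t).symm]
      exact hs
  · rintro ⟨hc, hs⟩
    have hcj : ∀ j : ℤ, -(l:ℤ) ≤ j → j ≤ r →
        ((W ((j : ℤ) : ZMod N) ω).1 ∈ ({phi0, phi15} : Set Rule) ↔ (j = -(l:ℤ) ∨ j = (r:ℤ))) := by
      intro j h1 h2
      have hk := hc ⟨(j + l).toNat, by omega⟩
      simp only at hk
      have hj : ((((j + l).toNat : ℤ) - l : ℤ)) = j := by omega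
      rw [hj] at hk
      exact hk.trans (by omega)
    refine ⟨hcj, ?_⟩
    show Stabilizes (trajC N W ω 0)
    rw [htraj, show (fun t => evolveC N (fun i => (W i ω).1) (fun i => (W i ω).2) t (((0:ℤ) : ZMod N)))
        = (fun t => evolveZ (fun j => (extRP l r (fun k => W ((((k : ℤ) - l : ℤ)) : ZMod N) ω) j).1)
            (fun j => (extRP l r (fun k => W ((((k : ℤ) - l : ℤ)) : ZMod N) ω) j).2) t 0)
      from funext fun t => key hcj t]
    exact hs

lemma prob_nonconst {Ω' : Type*} [MeasurableSpace Ω'] {ι : Type*}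
    (P : Measure Ω') [IsProbabilityMeasure P]
    (W : ι → Ω' → Rule × Bool) (hmeas : ∀ i, Measurable (W i))
    (hindep : iIndepFun W P)
    (ν : Measure (Rule × Bool)) [IsProbabilityMeasure ν]
    (hlaw : ∀ i, Measure.map (W i) P = ν)
    (m : ℕ) (c : Fin m → ι) (hc : Function.Injective c) :
    P {ω | ∀ k : Fin m, (W (c k) ω).1 ∉ ({phi0, phi15} : Set Rule)}
      = (ν {p | p.1 ∉ ({phi0, phi15} : Set Rule)}) ^ m := by
  have hset : {ω | ∀ k : Fin m, (W (c k) ω).1 ∉ ({phi0, phi15} : Set Rule)}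
      = (fun ω (k : Fin m) => W (c k) ω) ⁻¹'
        (Set.pi Set.univ fun _ => {p : Rule × Bool | p.1 ∉ ({phi0, phi15} : Set Rule)}) := by
    ext ω
    simp [Set.mem_pi]
  rw [hset, ← Measure.map_apply (measurable_pi_lambda _ (fun k => hmeas _)) MeasurableSet.of_discrete,
    map_window P W hmeas hindep ν hlaw m c hc, Measure.pi_pi, Finset.prod_const,
    Finset.card_univ, Fintype.card_fin]

lemma decomp {Ω' : Type*} [MeasurableSpace Ω'] {ι : Type*}
    (P : Measure Ω') [IsProbabilityMeasure P]
    (W : ι → Ω' → Rule × Bool) (hmeas : ∀ i, Measurable (W i))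
    (hindep : iIndepFun W P)
    (ν : Measure (Rule × Bool)) [IsProbabilityMeasure ν]
    (hlaw : ∀ i, Measure.map (W i) P = ν)
    (a b : ℕ) (ha : 1 ≤ a) (hb : 1 ≤ b) (emb : ℤ → ι)
    (hinj : ∀ x y : ℤ, -(b:ℤ) ≤ x → x ≤ a → -(b:ℤ) ≤ y → y ≤ a → emb x = emb y → x = y)
    (S : Set Ω')
    (hS0 : ∀ ω, (W (emb 0) ω).1 ∈ ({phi0, phi15} : Set Rule) → ω ∈ S)
    (hSlr : ∀ l r : ℕ, 1 ≤ l → l ≤ b → 1 ≤ r → r ≤ a →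
      {ω | (∀ j : ℤ, -(l:ℤ) ≤ j → j ≤ r →
          ((W (emb j) ω).1 ∈ ({phi0, phi15} : Set Rule) ↔ (j = -(l:ℤ) ∨ j = (r:ℤ)))) ∧ ω ∈ S}
        = (fun ω (k : Fin (l + r + 1)) => W (emb ((k : ℤ) - l)) ω) ⁻¹' winset l r) :
    ∃ x : ENNReal,
      P S = ν {p | p.1 ∈ ({phi0, phi15} : Set Rule)}
          + (∑ q ∈ Finset.Icc 1 b ×ˢ Finset.Icc 1 a,
              Measure.pi (fun _ : Fin (q.1 + q.2 + 1) => ν) (winset q.1 q.2)) + x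
        ∧ x ≤ (ν {p | p.1 ∉ ({phi0, phi15} : Set Rule)}) ^ (a + 1)
            + (ν {p | p.1 ∉ ({phi0, phi15} : Set Rule)}) ^ (b + 1) := by
  classical
  set C : Set Rule := {phi0, phi15} with hC
  set E0 : Set Ω' := W (emb 0) ⁻¹' {p | p.1 ∈ C} with hE0
  set E : ℕ → ℕ → Set Ω' := fun l r => {ω | ∀ j : ℤ, -(l:ℤ) ≤ j → j ≤ r →
      ((W (emb j) ω).1 ∈ C ↔ (j = -(l:ℤ) ∨ j = (r:ℤ)))} with hE
  set I : Finset (ℕ × ℕ) := Finset.Icc 1 b ×ˢ Finset.Icc 1 a with hI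
  have hIm : ∀ q : ℕ × ℕ, q ∈ I ↔ (1 ≤ q.1 ∧ q.1 ≤ b ∧ 1 ≤ q.2 ∧ q.2 ≤ a) := by
    intro q
    simp [hI, Finset.mem_product, Finset.mem_Icc, and_assoc]
  -- intersection with S is a window preimage
  have hES : ∀ q : ℕ × ℕ, q ∈ I → E q.1 q.2 ∩ S
      = (fun ω (k : Fin (q.1 + q.2 + 1)) => W (emb ((k : ℤ) - q.1)) ω) ⁻¹' winset q.1 q.2 := by
    intro q hq
    rw [hIm] at hq
    rw [← hSlr q.1 q.2 hq.1 hq.2.1 hq.2.2.1 hq.2.2.2]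
    rfl
  have hESmeas : ∀ q : ℕ × ℕ, q ∈ I → MeasurableSet (E q.1 q.2 ∩ S) := by
    intro q hq
    rw [hES q hq]
    exact (measurable_pi_lambda _ (fun k => hmeas _)) MeasurableSet.of_discrete
  -- measurability of E
  have hEmeas : ∀ l r : ℕ, MeasurableSet (E l r) := by
    intro l r
    have : E l r = ⋂ (j : ℤ), ⋂ (_ : -(l:ℤ) ≤ j), ⋂ (_ : j ≤ (r:ℤ)),
        W (emb j) ⁻¹' {p | p.1 ∈ C ↔ (j = -(l:ℤ) ∨ j = (r:ℤ))} := by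
      ext ω; simp [hE]
    rw [this]
    exact MeasurableSet.iInter fun j => MeasurableSet.iInter fun _ =>
      MeasurableSet.iInter fun _ => (hmeas _) MeasurableSet.of_discrete
  -- disjointness facts
  have hdis0 : ∀ q : ℕ × ℕ, q ∈ I → ∀ ω, ω ∈ E0 → ω ∉ E q.1 q.2 := by
    intro q hq ω h0 hEq
    rw [hIm] at hq
    have := (hEq 0 (by omega) (by omega)).mp h0
    omega
  have hdisE : ∀ q q' : ℕ × ℕ, q ∈ I → q' ∈ I → q ≠ q' → ∀ ω, ω ∈ E q.1 q.2 → ω ∉ E q'.1 q'.2 := by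
    intro q q' hq hq' hne ω h1 h2
    rw [hIm] at hq hq'
    rcases lt_trichotomy q.2 q'.2 with hr | hr | hr
    · have hc := (h1 q.2 (by omega) le_rfl).mpr (Or.inr rfl)
      have := (h2 q.2 (by omega) (by omega)).mp hc
      omega
    · rcases lt_trichotomy q.1 q'.1 with hl | hl | hl
      · have hc := (h1 (-(q.1:ℤ)) le_rfl (by omega)).mpr (Or.inl rfl)
        have := (h2 (-(q.1:ℤ)) (by omega) (by omega)).mp hc
        omega
      · exact hne (Prod.ext hl hr)
      · have hc := (h2 (-(q'.1:ℤ)) le_rfl (by omega)).mpr (Or.inl rfl)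
        have := (h1 (-(q'.1:ℤ)) (by omega) (by omega)).mp hc
        omega
    · have hc := (h2 q'.2 (by omega) le_rfl).mpr (Or.inr rfl)
      have := (h1 q'.2 (by omega) (by omega)).mp hc
      omega
  -- the good set
  set G : Set Ω' := E0 ∪ ⋃ q ∈ I, E q.1 q.2 with hG
  have hGmeas : MeasurableSet G :=
    ((hmeas _) MeasurableSet.of_discrete).union
      (MeasurableSet.biUnion I.countable_toSet (fun q _ => hEmeas q.1 q.2))
  -- covering
  have hcover : ∀ ω, ω ∉ G →
      (∀ j : ℤ, 0 ≤ j → j ≤ a → (W (emb j) ω).1 ∉ C) ∨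
      (∀ j : ℤ, -(b:ℤ) ≤ j → j ≤ 0 → (W (emb j) ω).1 ∉ C) := by
    intro ω hω
    by_contra hcon
    push_neg at hcon
    obtain ⟨⟨j1, hj10, hj1a, hj1c⟩, ⟨j2, hj2b, hj20, hj2c⟩⟩ := hcon
    have h0 : (W (emb 0) ω).1 ∉ C := by
      intro h0
      exact hω (Or.inl h0)
    have hj1 : 1 ≤ j1 := by
      rcases eq_or_lt_of_le hj10 with h | h
      · exact absurd hj1c (h ▸ h0)
      · omega
    have hj2 : j2 ≤ -1 := by
      rcases eq_or_lt_of_le hj20 with h | h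
      · exact absurd hj2c (h.symm ▸ h0)
      · omega
    have hQr : ∃ r : ℕ, 1 ≤ r ∧ (r:ℤ) ≤ a ∧ (W (emb r) ω).1 ∈ C :=
      ⟨j1.toNat, by omega, by omega, by rwa [show ((j1.toNat : ℤ)) = j1 by omega]⟩
    have hQl : ∃ l : ℕ, 1 ≤ l ∧ (l:ℤ) ≤ b ∧ (W (emb (-(l:ℤ))) ω).1 ∈ C :=
      ⟨(-j2).toNat, by omega, by omega, by rwa [show (-((-j2).toNat : ℤ)) = j2 by omega]⟩
    set r0 := Nat.find hQr with hr0
    set l0 := Nat.find hQl with hl0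
    obtain ⟨hr1, hra, hrc⟩ := Nat.find_spec hQr
    obtain ⟨hl1, hlb, hlc⟩ := Nat.find_spec hQl
    apply hω
    have hmemI : ((l0, r0) : ℕ × ℕ) ∈ I := by
      rw [hIm]
      exact ⟨hl1, by omega, hr1, by omega⟩
    refine Or.inr (Set.mem_biUnion hmemI ?_)
    · intro j hjl hjr
      constructor
      · intro hjc
        by_contra hne
        push_neg at hne
        rcases lt_trichotomy j 0 with hj | hj | hj
        · have hmin := Nat.find_min hQl (m := (-j).toNat) (by omega)
          push_neg at hmin
          exact absurd (by rwa [show (-(((-j).toNat : ℤ))) = j by omega]) (hmin (by omega) (by omega))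
        · exact h0 (hj ▸ hjc)
        · have hmin := Nat.find_min hQr (m := j.toNat) (by omega)
          push_neg at hmin
          exact absurd (by rwa [show ((j.toNat : ℤ)) = j by omega]) (hmin (by omega) (by omega))
      · rintro (rfl | rfl)
        · exact hlc
        · exact hrc
  -- decomposition of the measure
  refine ⟨P (S \ G), ?_, ?_⟩
  · have hsplit : P (S ∩ G) + P (S \ G) = P S := measure_inter_add_diff S hGmeas
    have hSG : S ∩ G = E0 ∪ ⋃ q ∈ I, (E q.1 q.2 ∩ S) := by
      ext ω
      simp only [Set.mem_inter_iff, hG, Set.mem_union, Set.mem_iUnion, Set.mem_inter_iff]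
      constructor
      · rintro ⟨hs, h0 | ⟨q, hq, hEq⟩⟩
        · exact Or.inl h0
        · exact Or.inr ⟨q, hq, hEq, hs⟩
      · rintro (h0 | ⟨q, hq, hEq, hs⟩)
        · exact ⟨hS0 ω h0, Or.inl h0⟩
        · exact ⟨hs, Or.inr ⟨q, hq, hEq⟩⟩
    have hPU : P (⋃ q ∈ I, (E q.1 q.2 ∩ S)) = ∑ q ∈ I, P (E q.1 q.2 ∩ S) := by
      refine measure_biUnion_finset ?_ hESmeas
      intro q hq q' hq' hne
      refine Set.disjoint_left.mpr (fun ω hω hω' => ?_)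
      exact hdisE q q' hq hq' hne ω hω.1 hω'.1
    have hPE0 : P E0 = ν {p | p.1 ∈ C} := by
      rw [hE0, ← Measure.map_apply (hmeas _) MeasurableSet.of_discrete, hlaw]
    have hPq : ∀ q ∈ I, P (E q.1 q.2 ∩ S)
        = Measure.pi (fun _ : Fin (q.1 + q.2 + 1) => ν) (winset q.1 q.2) := by
      intro q hq
      rw [hES q hq, ← Measure.map_apply (measurable_pi_lambda _ (fun k => hmeas _))
        MeasurableSet.of_discrete]
      rw [hIm] at hq
      rw [map_window P W hmeas hindep ν hlaw (q.1 + q.2 + 1) (fun k => emb ((k : ℤ) - q.1))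
        (fun k k' hkk => by
          have hk := k.isLt
          have hk' := k'.isLt
          have := hinj ((k : ℤ) - q.1) ((k' : ℤ) - q.1) (by omega) (by omega) (by omega) (by omega) hkk
          exact Fin.ext (by omega))]
    have hdisj : Disjoint E0 (⋃ q ∈ I, (E q.1 q.2 ∩ S)) := by
      refine Set.disjoint_left.mpr (fun ω hω hω' => ?_)
      obtain ⟨q, hq, hEq, _⟩ := Set.mem_iUnion₂.mp hω'
      exact hdis0 q hq ω hω hEq
    rw [← hsplit, hSG, measure_union hdisj
        (MeasurableSet.biUnion I.countable_toSet (fun q hq => hESmeas q hq)),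
      hPU, hPE0, Finset.sum_congr rfl hPq]
  · calc P (S \ G) ≤ P ({ω | ∀ j : ℤ, 0 ≤ j → j ≤ (a:ℤ) → (W (emb j) ω).1 ∉ C}
        ∪ {ω | ∀ j : ℤ, -(b:ℤ) ≤ j → j ≤ 0 → (W (emb j) ω).1 ∉ C}) := by
          refine measure_mono (fun ω hω => ?_)
          exact hcover ω hω.2
      _ ≤ P {ω | ∀ j : ℤ, 0 ≤ j → j ≤ (a:ℤ) → (W (emb j) ω).1 ∉ C}
          + P {ω | ∀ j : ℤ, -(b:ℤ) ≤ j → j ≤ 0 → (W (emb j) ω).1 ∉ C} := measure_union_le _ _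
      _ ≤ (ν {p | p.1 ∉ C}) ^ (a + 1) + (ν {p | p.1 ∉ C}) ^ (b + 1) := by
          have h1 : {ω | ∀ j : ℤ, 0 ≤ j → j ≤ (a:ℤ) → (W (emb j) ω).1 ∉ C}
              = {ω | ∀ k : Fin (a + 1), (W ((fun k : Fin (a+1) => emb (k : ℤ)) k) ω).1 ∉ C} := by
            ext ω
            constructor
            · intro h k
              exact h (k : ℤ) (by omega) (by have := k.isLt; omega)
            · intro h j hj0 hja
              set k : Fin (a+1) := ⟨j.toNat, by omega⟩ with hk
              have he : emb ((k : ℤ)) = emb j := by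
                congr 1
                rw [hk]
                simp only [Fin.val_mk]
                omega
              exact he ▸ h k
          have h2 : {ω | ∀ j : ℤ, -(b:ℤ) ≤ j → j ≤ 0 → (W (emb j) ω).1 ∉ C}
              = {ω | ∀ k : Fin (b + 1), (W ((fun k : Fin (b+1) => emb (-(k : ℤ))) k) ω).1 ∉ C} := by
            ext ω
            constructor
            · intro h k
              exact h (-(k : ℤ)) (by have := k.isLt; omega) (by omega)
            · intro h j hjb hj0
              set k : Fin (b+1) := ⟨(-j).toNat, by omega⟩ with hk
              have he : emb (-(k : ℤ)) = emb j := by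
                congr 1
                rw [hk]
                simp only [Fin.val_mk]
                omega
              exact he ▸ h k
          rw [h1, h2, prob_nonconst P W hmeas hindep ν hlaw (a+1) _
              (fun k k' hkk => by
                have hk := k.isLt
                have hk' := k'.isLt
                have := hinj (k : ℤ) (k' : ℤ) (by omega) (by omega) (by omega) (by omega) hkk
                exact Fin.ext (by omega)),
            prob_nonconst P W hmeas hindep ν hlaw (b+1) _
              (fun k k' hkk => by
                have hk := k.isLt
                have hk' := k'.isLt
                have := hinj (-(k : ℤ)) (-(k' : ℤ)) (by omega) (by omega) (by omega) (by omega) hkk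
                exact Fin.ext (by omega))]

instance : IsProbabilityMeasure berHalf := by
  constructor
  simp only [berHalf, Measure.smul_apply, Measure.add_apply, measure_univ, smul_eq_mul]
  rw [one_add_one_eq_two, ENNReal.inv_mul_cancel two_ne_zero ENNReal.ofNat_ne_top]

lemma nu_fst (mu : Measure Rule) [IsProbabilityMeasure mu] (s : Set Rule) :
    (mu.prod berHalf) {p | p.1 ∈ s} = mu s := by
  have h : {p : Rule × Bool | p.1 ∈ s} = s ×ˢ Set.univ := by ext p; simp
  rw [h, Measure.prod_prod, measure_univ, mul_one]

lemma pow_le_rpow_half {q : ℝ} (h0 : 0 ≤ q) (h1 : q ≤ 1) (m N : ℕ) (hm : N ≤ 2 * m)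
    (hN : 0 < N) : q ^ m ≤ q ^ ((N : ℝ) / 2) := by
  rcases eq_or_lt_of_le h0 with h | h
  · rw [← h, zero_pow (by omega : m ≠ 0),
      Real.zero_rpow ((div_pos (by exact_mod_cast hN) two_pos).ne')]
  · rw [← Real.rpow_natCast q m]
    refine Real.rpow_le_rpow_of_exponent_ge h h1 ?_
    have : (N : ℝ) ≤ 2 * m := by exact_mod_cast hm
    linarith

theorem stmt6' (mu : Measure Rule) [IsProbabilityMeasure mu]
    (hw : 0 < mu {phi0, phi15})
    {Ωinf : Type*} [MeasurableSpace Ωinf] (Pinf : Measure Ωinf) [IsProbabilityMeasure Pinf]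
    (Winf : ℤ → Ωinf → Rule × Bool) (hmeasinf : ∀ i, Measurable (Winf i))
    (hindepinf : iIndepFun Winf Pinf)
    (hlawinf : ∀ i, Measure.map (Winf i) Pinf = mu.prod berHalf)
    {Ωfin : ℕ → Type*} [∀ N, MeasurableSpace (Ωfin N)]
    (Pfin : ∀ N, Measure (Ωfin N)) [∀ N, IsProbabilityMeasure (Pfin N)]
    (Wfin : ∀ N, ZMod N → Ωfin N → Rule × Bool)
    (hmeasfin : ∀ N i, Measurable (Wfin N i))
    (hindepfin : ∀ N, iIndepFun (Wfin N) (Pfin N))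
    (hlawfin : ∀ N i, Measure.map (Wfin N i) (Pfin N) = mu.prod berHalf) :
    (mu {phi0, phi15}).toReal ≤ (Pinf {ω | Stabilizes (traj Winf ω 0)}).toReal ∧
    0 < (Pinf {ω | Stabilizes (traj Winf ω 0)}).toReal ∧
    (∀ N : ℕ, 3 ≤ N →
      |(Pfin N {ω | Stabilizes (trajC N (Wfin N) ω 0)}).toReal
          - (Pinf {ω | Stabilizes (traj Winf ω 0)}).toReal|
        ≤ 4 * (1 - (mu {phi0, phi15}).toReal) ^ ((N : ℝ) / 2)) ∧
    Tendsto (fun N => (Pfin N {ω | Stabilizes (trajC N (Wfin N) ω 0)}).toReal)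
      atTop (nhds (Pinf {ω | Stabilizes (traj Winf ω 0)}).toReal) := by
  classical
  set C : Set Rule := {phi0, phi15} with hC
  set SZ : Set Ωinf := {ω | Stabilizes (traj Winf ω 0)} with hSZ
  have hE0sub : Winf 0 ⁻¹' {p | p.1 ∈ C} ⊆ SZ := by
    intro ω h
    exact stabilizes_of_constZ _ _ (isConstRule_of_mem h)
  have hPE0 : Pinf (Winf 0 ⁻¹' {p | p.1 ∈ C}) = mu C := by
    rw [← Measure.map_apply (hmeasinf 0) MeasurableSet.of_discrete, hlawinf, nu_fst]
  have h1 : (mu C).toReal ≤ (Pinf SZ).toReal := by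
    refine ENNReal.toReal_mono (measure_ne_top _ _) ?_
    rw [← hPE0]
    exact measure_mono hE0sub
  have hwpos : 0 < (mu C).toReal := ENNReal.toReal_pos hw.ne' (measure_ne_top _ _)
  have h2 : 0 < (Pinf SZ).toReal := lt_of_lt_of_le hwpos h1
  set q : ℝ := 1 - (mu C).toReal with hq
  have hwle1 : (mu C).toReal ≤ 1 := by
    have := ENNReal.toReal_mono ENNReal.one_ne_top (prob_le_one (μ := mu) (s := C))
    simpa using this
  have hq0 : 0 ≤ q := by simp only [hq]; linarith
  have hq1 : q < 1 := by simp only [hq]; linarith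
  have hnc : (mu.prod berHalf) {p | p.1 ∉ C} = 1 - mu C := by
    have h : {p : Rule × Bool | p.1 ∉ C} = {p : Rule × Bool | p.1 ∈ Cᶜ} := rfl
    rw [h, nu_fst, measure_compl MeasurableSet.of_discrete (measure_ne_top _ _), measure_univ]
  have hsubne : (1 - mu C) ≠ ⊤ := (lt_of_le_of_lt tsub_le_self ENNReal.one_lt_top).ne
  have hsubR : (1 - mu C).toReal = q := by
    rw [ENNReal.toReal_sub_of_le prob_le_one ENNReal.one_ne_top, ENNReal.toReal_one]
  have h3 : ∀ N : ℕ, 3 ≤ N →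
      |(Pfin N {ω | Stabilizes (trajC N (Wfin N) ω 0)}).toReal - (Pinf SZ).toReal|
        ≤ 4 * q ^ ((N : ℝ) / 2) := by
    intro N hN
    set b : ℕ := N / 2 with hbdef
    set a : ℕ := N - 1 - b with hadef
    have ha1 : 1 ≤ a := by omega
    have hb1 : 1 ≤ b := by omega
    obtain ⟨x, hxeq, hxle⟩ := decomp Pinf Winf hmeasinf hindepinf (mu.prod berHalf) hlawinf
      a b ha1 hb1 (fun j => j) (fun x y _ _ _ _ h => h) SZ
      (fun ω h => hE0sub h)
      (fun l r hl _ hr _ => eventZ_eq Winf l r hl hr)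
    have hinjC : ∀ x y : ℤ, -(b:ℤ) ≤ x → x ≤ a → -(b:ℤ) ≤ y → y ≤ a →
        ((x : ZMod N) = (y : ZMod N)) → x = y := by
      intro x y hx1 hx2 hy1 hy2 hxy
      have hd : ((N:ℕ) : ℤ) ∣ y - x := (ZMod.intCast_eq_intCast_iff_dvd_sub x y N).mp hxy
      have hz : y - x = 0 := Int.eq_zero_of_abs_lt_dvd hd (abs_lt.mpr ⟨by omega, by omega⟩)
      omega
    obtain ⟨y, hyeq, hyle⟩ := decomp (Pfin N) (Wfin N) (hmeasfin N) (hindepfin N)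
      (mu.prod berHalf) (hlawfin N) a b ha1 hb1 (fun j => ((j : ℤ) : ZMod N)) hinjC
      {ω | Stabilizes (trajC N (Wfin N) ω 0)}
      (fun ω h => stabilizes_of_constC N _ _ (isConstRule_of_mem (by
        simpa using h)))
      (fun l r hl _ hr _ => eventC_eq N (Wfin N) l r hl hr)
    set T : ENNReal := (mu.prod berHalf) {p | p.1 ∈ C}
      + (∑ p ∈ Finset.Icc 1 b ×ˢ Finset.Icc 1 a,
          Measure.pi (fun _ : Fin (p.1 + p.2 + 1) => mu.prod berHalf) (winset p.1 p.2)) with hT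
    have hTne : T ≠ ⊤ := by
      refine ne_top_of_le_ne_top (measure_ne_top Pinf SZ) ?_
      rw [hxeq]
      exact le_self_add
    have hxne : x ≠ ⊤ := by
      refine ne_top_of_le_ne_top (measure_ne_top Pinf SZ) ?_
      rw [hxeq]
      exact le_add_self
    have hyne : y ≠ ⊤ := by
      refine ne_top_of_le_ne_top (measure_ne_top (Pfin N) {ω | Stabilizes (trajC N (Wfin N) ω 0)}) ?_
      rw [hyeq]
      exact le_add_self
    have hxR : (Pinf SZ).toReal = T.toReal + x.toReal := by
      rw [hxeq, ENNReal.toReal_add hTne hxne]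
    have hyR : (Pfin N {ω | Stabilizes (trajC N (Wfin N) ω 0)}).toReal
        = T.toReal + y.toReal := by
      rw [hyeq, ENNReal.toReal_add hTne hyne]
    rw [hnc] at hxle hyle
    have hBne : (1 - mu C) ^ (a + 1) + (1 - mu C) ^ (b + 1) ≠ ⊤ :=
      ENNReal.add_ne_top.mpr ⟨ENNReal.pow_ne_top hsubne, ENNReal.pow_ne_top hsubne⟩
    have hBR : ((1 - mu C) ^ (a + 1) + (1 - mu C) ^ (b + 1)).toReal
        = q ^ (a + 1) + q ^ (b + 1) := by
      rw [ENNReal.toReal_add (ENNReal.pow_ne_top hsubne) (ENNReal.pow_ne_top hsubne),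
        ENNReal.toReal_pow, ENNReal.toReal_pow, hsubR]
    have hxB : x.toReal ≤ q ^ (a + 1) + q ^ (b + 1) := by
      rw [← hBR]
      exact ENNReal.toReal_mono hBne hxle
    have hyB : y.toReal ≤ q ^ (a + 1) + q ^ (b + 1) := by
      rw [← hBR]
      exact ENNReal.toReal_mono hBne hyle
    have hx0 : 0 ≤ x.toReal := ENNReal.toReal_nonneg
    have hy0 : 0 ≤ y.toReal := ENNReal.toReal_nonneg
    have hpa : q ^ (a + 1) ≤ q ^ ((N : ℝ) / 2) :=
      pow_le_rpow_half hq0 hq1.le (a + 1) N (by omega) (by omega)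
    have hpb : q ^ (b + 1) ≤ q ^ ((N : ℝ) / 2) :=
      pow_le_rpow_half hq0 hq1.le (b + 1) N (by omega) (by omega)
    have hrp0 : 0 ≤ q ^ ((N : ℝ) / 2) := Real.rpow_nonneg hq0 _
    rw [hxR, hyR]
    rw [abs_le]
    constructor <;> nlinarith [hpa, hpb, hxB, hyB, hx0, hy0]
  refine ⟨h1, h2, h3, ?_⟩
  have hs0 : 0 ≤ q ^ ((1:ℝ)/2) := Real.rpow_nonneg hq0 _
  have hs1 : q ^ ((1:ℝ)/2) < 1 := Real.rpow_lt_one hq0 hq1 (by norm_num)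
  have ht : Tendsto (fun N : ℕ => 4 * (q ^ ((1:ℝ)/2)) ^ N) atTop (nhds 0) := by
    have := (tendsto_pow_atTop_nhds_zero_of_lt_one hs0 hs1).const_mul (4:ℝ)
    simpa using this
  have hfg : ∀ N : ℕ, 4 * q ^ ((N:ℝ)/2) = 4 * (q ^ ((1:ℝ)/2)) ^ N := by
    intro N
    rw [show ((N:ℝ)/2) = ((1:ℝ)/2) * N from by ring, Real.rpow_mul hq0, Real.rpow_natCast]
  have habs : ∀ᶠ N in atTop, ‖(Pfin N {ω | Stabilizes (trajC N (Wfin N) ω 0)}).toReal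
      - (Pinf SZ).toReal‖ ≤ 4 * (q ^ ((1:ℝ)/2)) ^ N := by
    refine eventually_atTop.mpr ⟨3, fun N hN => ?_⟩
    rw [← hfg N]
    simpa [Real.norm_eq_abs] using h3 N hN
  have := squeeze_zero_norm' habs ht
  exact tendsto_sub_nhds_zero_iff.mp this


/-- let μ be any rule distribution and `w = μ({φ0, φ15}) > 0`. Then the
RBCA with rule distribution μ (i.i.d. pairs of rule ~ μ and Bernoulli(1/2) initial state)
satisfies `σ_* ≥ w`, `σ_* > 0`, `|σ_N - σ_*| ≤ 4 (1-w)^{N/2}` for all `N ≥ 3`, and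
`σ_N → σ_*`. -/
theorem stmt6 (mu : Measure Rule) [IsProbabilityMeasure mu]
    (hw : 0 < mu {phi0, phi15})
    -- the infinite RBCA on ℤ
    {Ωinf : Type*} [MeasurableSpace Ωinf] (Pinf : Measure Ωinf) [IsProbabilityMeasure Pinf]
    (Winf : ℤ → Ωinf → Rule × Bool) (hmeasinf : ∀ i, Measurable (Winf i))
    (hindepinf : iIndepFun Winf Pinf)
    (hlawinf : ∀ i, Measure.map (Winf i) Pinf = mu.prod berHalf)
    -- the RBCA's on the circles ℤ/Nℤ
    {Ωfin : ℕ → Type*} [∀ N, MeasurableSpace (Ωfin N)]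
    (Pfin : ∀ N, Measure (Ωfin N)) [∀ N, IsProbabilityMeasure (Pfin N)]
    (Wfin : ∀ N, ZMod N → Ωfin N → Rule × Bool)
    (hmeasfin : ∀ N i, Measurable (Wfin N i))
    (hindepfin : ∀ N, iIndepFun (Wfin N) (Pfin N))
    (hlawfin : ∀ N i, Measure.map (Wfin N i) (Pfin N) = mu.prod berHalf) :
    (mu {phi0, phi15}).toReal ≤ (Pinf {ω | Stabilizes (traj Winf ω 0)}).toReal ∧
    0 < (Pinf {ω | Stabilizes (traj Winf ω 0)}).toReal ∧
    (∀ N : ℕ, 3 ≤ N →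
      |(Pfin N {ω | Stabilizes (trajC N (Wfin N) ω 0)}).toReal
          - (Pinf {ω | Stabilizes (traj Winf ω 0)}).toReal|
        ≤ 4 * (1 - (mu {phi0, phi15}).toReal) ^ ((N : ℝ) / 2)) ∧
    Tendsto (fun N => (Pfin N {ω | Stabilizes (trajC N (Wfin N) ω 0)}).toReal)
      atTop (nhds (Pinf {ω | Stabilizes (traj Winf ω 0)}).toReal) :=
  stmt6' mu hw Pinf Winf hmeasinf hindepinf hlawinf Pfin Wfin hmeasfin hindepfin hlawfin
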